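/- arXiv:2503.00027 — 3 statements merged into one kernel-verified Lean document; each statement's English description precedes it below -/
import Mathlib

section
/- (Lemma 1, pure VIO under pure translational straight-line motion.) Let R_GI and R_IC be real 3×3 rotation matrices, d, p_f, p₁, p_k, v₁, g ∈ ℝ³, δt ∈ ℝ, and let Φ₁₂, Φ₅₂ be arbitrary real 3×3 matrices. Assume the straight-line constraint: there exists q ∈ ℝ³ with q ×₃ d = 0 and p_k = p₁ + R_GI.mulVec q. Then the block matrix–vector product Ξ · N₁ equals 0 ∈ ℝ³, where Ξ = [Γ₁, Γ₂, −δt•1, Γ₃, −1, Γ₄, 1] acts blockwise on N₁ = (0, 0, 0, 0, 0, R_IC.mulVec d, −S(p_f − p₁).mulVec (R_GI.mulVec d)); explicitly, Γ₁.mulVec 0 + Γ₂.mulVec 0 + (−δt)•0 + Γ₃.mulVec 0 + (−1)•0 + Γ₄.mulVec (R_IC.mulVec d) + (−S(p_f − p₁).mulVec (R_GI.mulVec d)) = 0, i.e., Γ₄.mulVec (R_IC.mulVec d) = S(p_f − p₁).mulVec (R_GI.mulVec d). -/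
/-!
A rotation `A` commutes with the cross product, `A u ⨯₃ A v = A (u ⨯₃ v)`. Along the line the
displacement `p_k - p₁ = R_GI q` is parallel to `R_GI d`, so it drops out of
`S(p_f - p_k) R_GI d = (p_f - p_k) ⨯₃ R_GI d`, leaving `S(p_f - p₁) R_GI d`.
-/

open Matrix

/-- The skew-symmetric (cross-product) matrix of a vector in ℝ³. -/
def skew (v : Fin 3 → ℝ) : Matrix (Fin 3) (Fin 3) ℝ :=
  !![0, -v 2, v 1; v 2, 0, -v 0; -v 1, v 0, 0]

lemma skew_mulVec (v w : Fin 3 → ℝ) : skew v *ᵥ w = v ⨯₃ w := by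
  ext i
  fin_cases i <;>
    simp [skew, mulVec, dotProduct, crossProduct, Fin.sum_univ_succ] <;> ring

section CrossProduct

variable {R : Type*} [CommRing R]

lemma transpose_mulVec_cross_mulVec (A : Matrix (Fin 3) (Fin 3) R) (u v : Fin 3 → R) :
    Aᵀ *ᵥ ((A *ᵥ u) ⨯₃ (A *ᵥ v)) = A.det • (u ⨯₃ v) := by
  ext i
  fin_cases i <;>
    simp [mulVec, dotProduct, crossProduct, Fin.sum_univ_succ, det_fin_three, transpose] <;>
    ring

lemma mulVec_cross_mulVec_of_rotation {A : Matrix (Fin 3) (Fin 3) R}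
    (hA : Aᵀ * A = 1) (hdet : A.det = 1) (u v : Fin 3 → R) :
    (A *ᵥ u) ⨯₃ (A *ᵥ v) = A *ᵥ (u ⨯₃ v) := by
  have hA' : A * Aᵀ = 1 := mul_eq_one_comm.mp hA
  calc (A *ᵥ u) ⨯₃ (A *ᵥ v) = A *ᵥ (Aᵀ *ᵥ ((A *ᵥ u) ⨯₃ (A *ᵥ v))) := by
        rw [mulVec_mulVec, hA', one_mulVec]
    _ = A *ᵥ (u ⨯₃ v) := by
        rw [transpose_mulVec_cross_mulVec, hdet, one_smul]

end CrossProduct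

theorem lemma1_pure_vio_straight_line_general
    (R_GI R_IC : Matrix (Fin 3) (Fin 3) ℝ)
    (hGI : R_GIᵀ * R_GI = 1) (hGIdet : R_GI.det = 1)
    (hIC : R_ICᵀ * R_IC = 1)
    (d pf p₁ pk v₁ g : Fin 3 → ℝ) (δt : ℝ)
    (Φ₁₂ Φ₅₂ : Matrix (Fin 3) (Fin 3) ℝ)
    (hline : ∃ q : Fin 3 → ℝ, q ⨯₃ d = 0 ∧ pk = p₁ + R_GI.mulVec q) :
    (skew (pf - p₁ - δt • v₁ + (δt ^ 2 / 2) • g) * R_GI).mulVec 0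
      + (skew (pf - pk) * R_GI * Φ₁₂ - Φ₅₂).mulVec 0
      + (-δt) • (0 : Fin 3 → ℝ)
      + ((δt ^ 2 / 2) • R_GI).mulVec 0
      + (-1 : ℝ) • (0 : Fin 3 → ℝ)
      + (skew (pf - pk) * R_GI * R_ICᵀ).mulVec (R_IC.mulVec d)
      + (-(skew (pf - p₁)).mulVec (R_GI.mulVec d)) = 0
    ∧ (skew (pf - pk) * R_GI * R_ICᵀ).mulVec (R_IC.mulVec d)
        = (skew (pf - p₁)).mulVec (R_GI.mulVec d) := by
  obtain ⟨q, hq, rfl⟩ := hline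
  have hΓ₄ : (skew (pf - (p₁ + R_GI *ᵥ q)) * R_GI * R_ICᵀ) *ᵥ (R_IC *ᵥ d)
      = skew (pf - p₁) *ᵥ (R_GI *ᵥ d) := by
    calc (skew (pf - (p₁ + R_GI *ᵥ q)) * R_GI * R_ICᵀ) *ᵥ (R_IC *ᵥ d)
        = (pf - p₁ - R_GI *ᵥ q) ⨯₃ (R_GI *ᵥ d) := by
          rw [← mulVec_mulVec, mulVec_mulVec d R_ICᵀ R_IC, hIC, one_mulVec, ← mulVec_mulVec,
            skew_mulVec, sub_add_eq_sub_sub]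
      _ = (pf - p₁) ⨯₃ (R_GI *ᵥ d) - R_GI *ᵥ (q ⨯₃ d) := by
          rw [map_sub, LinearMap.sub_apply, mulVec_cross_mulVec_of_rotation hGI hGIdet]
      _ = skew (pf - p₁) *ᵥ (R_GI *ᵥ d) := by
          rw [hq, mulVec_zero, sub_zero, skew_mulVec]
  refine ⟨?_, hΓ₄⟩
  simp [hΓ₄]

/-- Lemma 1 (pure VIO under pure translational straight-line motion):
the block row `Ξ = [Γ₁, Γ₂, −δt•1, Γ₃, −1, Γ₄, 1]` annihilates the candidate null
direction `N₁ = (0, 0, 0, 0, 0, R_IC d, −S(p_f − p₁) (R_GI d))`; equivalently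
`Γ₄ (R_IC d) = S(p_f − p₁) (R_GI d)`. -/
theorem lemma1_pure_vio_straight_line
    (R_GI R_IC : Matrix (Fin 3) (Fin 3) ℝ)
    (hGI : R_GIᵀ * R_GI = 1) (hGIdet : R_GI.det = 1)
    (hIC : R_ICᵀ * R_IC = 1) (hICdet : R_IC.det = 1)
    (d pf p₁ pk v₁ g : Fin 3 → ℝ) (δt : ℝ)
    (Φ₁₂ Φ₅₂ : Matrix (Fin 3) (Fin 3) ℝ)
    (hline : ∃ q : Fin 3 → ℝ, q ⨯₃ d = 0 ∧ pk = p₁ + R_GI.mulVec q) :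
    (skew (pf - p₁ - δt • v₁ + (δt ^ 2 / 2) • g) * R_GI).mulVec 0
      + (skew (pf - pk) * R_GI * Φ₁₂ - Φ₅₂).mulVec 0
      + (-δt) • (0 : Fin 3 → ℝ)
      + ((δt ^ 2 / 2) • R_GI).mulVec 0
      + (-1 : ℝ) • (0 : Fin 3 → ℝ)
      + (skew (pf - pk) * R_GI * R_ICᵀ).mulVec (R_IC.mulVec d)
      + (-(skew (pf - p₁)).mulVec (R_GI.mulVec d)) = 0
    ∧ (skew (pf - pk) * R_GI * R_ICᵀ).mulVec (R_IC.mulVec d)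
        = (skew (pf - p₁)).mulVec (R_GI.mulVec d) :=
  lemma1_pure_vio_straight_line_general R_GI R_IC hGI hGIdet hIC d pf p₁ pk v₁ g δt Φ₁₂ Φ₅₂ hline
end

section
/- (Unobservability corollary for pure VIO under straight-line motion.) Let R_GI and R_IC be real 3×3 rotation matrices, d, p_f, p₁, v₁, g ∈ ℝ³ with d ≠ 0. Then the vector N₁ ∈ (Fin 7) → (Fin 3 → ℝ) with blocks (0, 0, 0, 0, 0, R_IC.mulVec d, −S(p_f − p₁).mulVec (R_GI.mulVec d)) is nonzero (its rotational-extrinsic block R_IC.mulVec d is nonzero), and for EVERY time index along the straight-line trajectory — i.e., for every δt ∈ ℝ, every q ∈ ℝ³ with q ×₃ d = 0, every p_k = p₁ + R_GI.mulVec q, and every choice of 3×3 matrices Φ₁₂, Φ₅₂ — the block row Ξ = [Γ₁, Γ₂, −δt•1, Γ₃, −1, Γ₄, 1] (with Γ₁ = S(p_f − p₁ − δt•v₁ + (δt²/2)•g) * R_GI, Γ₂ = S(p_f − p_k) * R_GI * Φ₁₂ − Φ₅₂, Γ₃ = (δt²/2)•R_GI, Γ₄ = S(p_f − p_k) * R_GI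 * R_ICᵀ) satisfies Ξ · N₁ = 0. Hence the stacked observability matrix has a nontrivial right null space involving the rotational extrinsic parameter. -/
/-!
On a straight line the displacement `p_k - p₁ = R_GI q` is parallel to `R_GI d`, so it drops out
of the cross product with `R_GI d`. Since `R_ICᵀ R_IC = 1`, the extrinsic block therefore
contributes `Γ₄ (R_IC d) = (p_f - p₁) × R_GI d` at every time, which the last block of `N₁`
cancels; all other blocks of `N₁` vanish.
-/

open Matrix

/-- The candidate unobservable direction `N₁` for pure VIO under straight-line motion. -/
def N₁ (R_GI R_IC : Matrix (Fin 3) (Fin 3) ℝ) (d pf p₁ : Fin 3 → ℝ) :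
    Fin 7 → (Fin 3 → ℝ) :=
  ![0, 0, 0, 0, 0, R_IC.mulVec d, -(skew (pf - p₁)).mulVec (R_GI.mulVec d)]

lemma Matrix.mulVec_ne_zero_of_mul_eq_one {m n R : Type*} [Fintype m] [Fintype n] [DecidableEq n]
    [Semiring R]
    {A : Matrix m n R} {B : Matrix n m R} (hBA : B * A = 1) {v : n → R} (hv : v ≠ 0) :
    A *ᵥ v ≠ 0 := by
  intro hAv
  apply hv
  rw [← one_mulVec v, ← hBA, ← mulVec_mulVec, hAv, mulVec_zero]

lemma exists_smul_eq_of_cross_eq_zero {F : Type*} [Field F] {q d : Fin 3 → F} (hd : d ≠ 0)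
    (hqd : q ⨯₃ d = 0) : ∃ c : F, c • d = q := by
  have hdq : d ⨯₃ q = 0 := by rw [← cross_anticomm, hqd, neg_zero]
  have hdep : ¬ LinearIndependent F ![d, q] := by
    rw [← crossProduct_ne_zero_iff_linearIndependent, not_not, hdq]
  simpa [LinearIndependent.pair_iff' hd] using hdep

lemma sub_smul_cross_self {R : Type*} [CommRing R] (v w : Fin 3 → R) (c : R) :
    (v - c • w) ⨯₃ w = v ⨯₃ w := by
  simp

lemma skew_mul_mul_transpose_mulVec_of_collinear {R_GI R_IC : Matrix (Fin 3) (Fin 3) ℝ}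
    (hIC : R_ICᵀ * R_IC = 1) (d pf p₁ : Fin 3 → ℝ) (c : ℝ) :
    (skew (pf - (p₁ + R_GI *ᵥ (c • d))) * R_GI * R_ICᵀ) *ᵥ (R_IC *ᵥ d)
      = skew (pf - p₁) *ᵥ (R_GI *ᵥ d) := by
  have hdisp : pf - (p₁ + R_GI *ᵥ (c • d)) = (pf - p₁) - c • (R_GI *ᵥ d) := by
    rw [mulVec_smul]
    abel
  rw [mulVec_mulVec, Matrix.mul_assoc, Matrix.mul_assoc, hIC, Matrix.mul_one, ← mulVec_mulVec,
    skew_mulVec, skew_mulVec, hdisp, sub_smul_cross_self]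

theorem unobservable_direction_pure_vio_straight_line_general
    (R_GI R_IC : Matrix (Fin 3) (Fin 3) ℝ)
    (hIC : R_ICᵀ * R_IC = 1)
    (d pf p₁ v₁ g : Fin 3 → ℝ) (hd : d ≠ 0) :
    R_IC.mulVec d ≠ 0
    ∧ N₁ R_GI R_IC d pf p₁ ≠ 0
    ∧ ∀ (δt : ℝ) (q pk : Fin 3 → ℝ) (Φ₁₂ Φ₅₂ : Matrix (Fin 3) (Fin 3) ℝ),
        q ⨯₃ d = 0 → pk = p₁ + R_GI.mulVec q →
        (skew (pf - p₁ - δt • v₁ + (δt ^ 2 / 2) • g) * R_GI).mulVec (N₁ R_GI R_IC d pf p₁ 0)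
          + (skew (pf - pk) * R_GI * Φ₁₂ - Φ₅₂).mulVec (N₁ R_GI R_IC d pf p₁ 1)
          + ((-δt) • (1 : Matrix (Fin 3) (Fin 3) ℝ)).mulVec (N₁ R_GI R_IC d pf p₁ 2)
          + ((δt ^ 2 / 2) • R_GI).mulVec (N₁ R_GI R_IC d pf p₁ 3)
          + (-(1 : Matrix (Fin 3) (Fin 3) ℝ)).mulVec (N₁ R_GI R_IC d pf p₁ 4)
          + (skew (pf - pk) * R_GI * R_ICᵀ).mulVec (N₁ R_GI R_IC d pf p₁ 5)
          + (1 : Matrix (Fin 3) (Fin 3) ℝ).mulVec (N₁ R_GI R_IC d pf p₁ 6) = 0 := by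
  have hICd : R_IC *ᵥ d ≠ 0 := mulVec_ne_zero_of_mul_eq_one hIC hd
  refine ⟨hICd, fun hN => hICd (congrFun hN 5), ?_⟩
  rintro δt q pk Φ₁₂ Φ₅₂ hqd rfl
  obtain ⟨c, rfl⟩ := exists_smul_eq_of_cross_eq_zero hd hqd
  simp only [N₁, Fin.isValue, cons_val, mulVec_zero, zero_add, one_mulVec,
    skew_mul_mul_transpose_mulVec_of_collinear hIC, add_neg_cancel]

/-- Unobservability corollary for pure VIO under straight-line motion: `N₁` is nonzero
(its rotational-extrinsic block `R_IC d` is nonzero), and every block row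
`Ξ = [Γ₁, Γ₂, −δt•1, Γ₃, −1, Γ₄, 1]` of the stacked observability matrix along the
straight-line trajectory annihilates it. -/
theorem unobservable_direction_pure_vio_straight_line
    (R_GI R_IC : Matrix (Fin 3) (Fin 3) ℝ)
    (hGI : R_GIᵀ * R_GI = 1) (hGIdet : R_GI.det = 1)
    (hIC : R_ICᵀ * R_IC = 1) (hICdet : R_IC.det = 1)
    (d pf p₁ v₁ g : Fin 3 → ℝ) (hd : d ≠ 0) :
    R_IC.mulVec d ≠ 0
    ∧ N₁ R_GI R_IC d pf p₁ ≠ 0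
    ∧ ∀ (δt : ℝ) (q pk : Fin 3 → ℝ) (Φ₁₂ Φ₅₂ : Matrix (Fin 3) (Fin 3) ℝ),
        q ⨯₃ d = 0 → pk = p₁ + R_GI.mulVec q →
        (skew (pf - p₁ - δt • v₁ + (δt ^ 2 / 2) • g) * R_GI).mulVec (N₁ R_GI R_IC d pf p₁ 0)
          + (skew (pf - pk) * R_GI * Φ₁₂ - Φ₅₂).mulVec (N₁ R_GI R_IC d pf p₁ 1)
          + ((-δt) • (1 : Matrix (Fin 3) (Fin 3) ℝ)).mulVec (N₁ R_GI R_IC d pf p₁ 2)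
          + ((δt ^ 2 / 2) • R_GI).mulVec (N₁ R_GI R_IC d pf p₁ 3)
          + (-(1 : Matrix (Fin 3) (Fin 3) ℝ)).mulVec (N₁ R_GI R_IC d pf p₁ 4)
          + (skew (pf - pk) * R_GI * R_ICᵀ).mulVec (N₁ R_GI R_IC d pf p₁ 5)
          + (1 : Matrix (Fin 3) (Fin 3) ℝ).mulVec (N₁ R_GI R_IC d pf p₁ 6) = 0 :=
  unobservable_direction_pure_vio_straight_line_general R_GI R_IC hIC d pf p₁ v₁ g hd
end

section
/- (Lemma 4, positive part: N₁ remains a null direction for global-pose aided VIO under constant-velocity straight-line motion.) Let R_GI and R_IC be real 3×3 rotation matrices, d, p_f, p₁, g ∈ ℝ³, δt ∈ ℝ, c ∈ ℝ, and let Φ₁₁, Φ₁₂, Φ₅₁, Φ₅₂, Φ₅₃, Φ₅₄ be arbitrary real 3×3 matrices. Assume constant-velocity straight-line motion along d: v₁ = c•(R_GI.mulVec d) and p_k = p₁ + δt•v₁. Define N₁ with blocks (0, 0, 0, 0, 0, R_IC.mulVec d, −S(p_f − p₁).mulVec (R_GI.mulVec d)), Γ₁ = S(p_f − p₁ − δt•v₁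 + (δt²/2)•g) * R_GI, Γ₂ = S(p_f − p_k) * R_GI * Φ₁₂ − Φ₅₂, Γ₃ = (δt²/2)•R_GI, Γ₄ = S(p_f − p_k) * R_GI * R_ICᵀ. Then Ξ⁽ᵍ⁾ · N₁ = 0, where Ξ⁽ᵍ⁾ is the 3×7-block matrix with block rows [Γ₁, Γ₂, −δt•1, Γ₃, −1, Γ₄, 1], [Φ₁₁, Φ₁₂, 0, 0, 0, 0, 0], and [Φ₅₁, Φ₅₂, Φ₅₃, Φ₅₄, 1, 0, 0]. -/
open Matrix

/-- Auxiliary: the only nontrivial part of the first block row. -/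
theorem lemma4_aux (R_GI R_IC : Matrix (Fin 3) (Fin 3) ℝ)
    (hIC : R_ICᵀ * R_IC = 1)
    (d pf p₁ v₁ pk : Fin 3 → ℝ) (δt c : ℝ)
    (hv : v₁ = c • (R_GI.mulVec d))
    (hpk : pk = p₁ + δt • v₁) :
    (skew (pf - pk) * R_GI * R_ICᵀ).mulVec (R_IC.mulVec d)
        - (skew (pf - p₁)).mulVec (R_GI.mulVec d) = 0 := by
  have key : (skew (pf - pk) * R_GI * R_ICᵀ).mulVec (R_IC.mulVec d)
      = (skew (pf - pk)).mulVec (R_GI.mulVec d) := by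
    rw [mulVec_mulVec, mul_assoc (skew (pf - pk) * R_GI), hIC, mul_one,
      ← mulVec_mulVec]
  rw [key]
  subst hpk hv
  set w := R_GI.mulVec d with hw
  clear hw
  funext i
  fin_cases i <;>
    simp [skew, mulVec, dotProduct, Fin.sum_univ_three] <;> ring

/-- Lemma 4, positive part: `N₁` remains a null direction for global-pose aided VIO
under constant-velocity straight-line motion along `d`: all three block rows of the
global-pose-aided observability block matrix `Ξ⁽ᵍ⁾` annihilate
`N₁ = (0, 0, 0, 0, 0, R_IC d, −S(p_f − p₁) (R_GI d))`. -/
theorem lemma4_positive_global_pose_vio_constant_velocity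
    (R_GI R_IC : Matrix (Fin 3) (Fin 3) ℝ)
    (hGI : R_GIᵀ * R_GI = 1) (hGIdet : R_GI.det = 1)
    (hIC : R_ICᵀ * R_IC = 1) (hICdet : R_IC.det = 1)
    (d pf p₁ g v₁ pk : Fin 3 → ℝ) (δt c : ℝ)
    (Φ₁₁ Φ₁₂ Φ₅₁ Φ₅₂ Φ₅₃ Φ₅₄ : Matrix (Fin 3) (Fin 3) ℝ)
    (hv : v₁ = c • (R_GI.mulVec d))
    (hpk : pk = p₁ + δt • v₁) :
    ((skew (pf - p₁ - δt • v₁ + (δt ^ 2 / 2) • g) * R_GI).mulVec 0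
        + (skew (pf - pk) * R_GI * Φ₁₂ - Φ₅₂).mulVec 0
        + (-δt) • (0 : Fin 3 → ℝ)
        + ((δt ^ 2 / 2) • R_GI).mulVec 0
        + (-1 : ℝ) • (0 : Fin 3 → ℝ)
        + (skew (pf - pk) * R_GI * R_ICᵀ).mulVec (R_IC.mulVec d)
        - (skew (pf - p₁)).mulVec (R_GI.mulVec d) = 0)
    ∧ (Φ₁₁.mulVec 0 + Φ₁₂.mulVec 0 = 0)
    ∧ (Φ₅₁.mulVec 0 + Φ₅₂.mulVec 0 + Φ₅₃.mulVec 0 + Φ₅₄.mulVec 0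
        + (0 : Fin 3 → ℝ) = 0) := by
  refine ⟨?_, by simp, by simp⟩
  simp only [mulVec_zero, smul_zero, zero_add, add_zero]
  exact lemma4_aux R_GI R_IC hIC d pf p₁ v₁ pk δt c hv hpk
end
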